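/- arXiv:1504.01671 — 7 statements merged into one kernel-verified Lean document; each statement's English description precedes it below -/
import Mathlib

section
/- For every increasing sequence (b_i)_{i∈ℕ} of positive real numbers with b_i → ∞ there exists an increasing concave function ψ : [0,∞) → [0,∞) with lim_{t→∞} ψ(t) = ∞ and ψ(b_i) ≤ 2^i for all i ∈ ℕ. -/
open Filter

/-- For every increasing sequence of positive reals tending to infinity, there is an
increasing concave function `ψ : [0,∞) → [0,∞)` with `ψ(t) → ∞` and `ψ(b i) ≤ 2^i`. -/
theorem exists_increasing_concave_of_tendsto_atTop
    (b : ℕ → ℝ) (hpos : ∀ i, 0 < b i) (hmono : Monotone b)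
    (htop : Tendsto b atTop atTop) :
    ∃ ψ : ℝ → ℝ,
      (∀ t, 0 ≤ t → 0 ≤ ψ t) ∧
      MonotoneOn ψ (Set.Ici (0 : ℝ)) ∧
      ConcaveOn ℝ (Set.Ici (0 : ℝ)) ψ ∧
      Tendsto ψ atTop atTop ∧
      ∀ i : ℕ, ψ (b i) ≤ 2 ^ i := by
  set f : ℕ → ℝ → ℝ := fun i t => (2:ℝ)^i / 2 + (2:ℝ)^i * t / (2 * b i) with hf
  have hbdd : ∀ t, 0 ≤ t → BddBelow (Set.range fun i => f i t) := by
    intro t ht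
    refine ⟨0, ?_⟩
    rintro x ⟨i, rfl⟩
    have := hpos i
    simp only [hf]
    positivity
  refine ⟨fun t => ⨅ i, f i t, ?_, ?_, ?_, ?_, ?_⟩
  · intro t ht
    refine le_ciInf fun i => ?_
    have := hpos i
    simp only [hf]
    positivity
  · intro s hs t ht hst
    refine le_ciInf fun i => (ciInf_le (hbdd s hs) i).trans ?_
    have := hpos i
    simp only [hf]
    gcongr
  · refine ⟨convex_Ici 0, ?_⟩
    intro x hx y hy a a' ha ha' hab
    simp only [smul_eq_mul]
    refine le_ciInf fun i => ?_
    have h1 := ciInf_le (hbdd x hx) i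
    have h2 := ciInf_le (hbdd y hy) i
    have hbne : (b i) ≠ 0 := (hpos i).ne'
    have key : a * f i x + a' * f i y = f i (a * x + a' * y) := by
      have ha'' : a' = 1 - a := by linarith
      rw [ha'']
      simp only [hf]
      field_simp
      ring
    calc a * (⨅ j, f j x) + a' * (⨅ j, f j y)
        ≤ a * f i x + a' * f i y := by gcongr
      _ = f i (a * x + a' * y) := key
  · rw [tendsto_atTop]
    intro M
    set K := max M 1 with hK
    have hK1 : (1:ℝ) ≤ K := le_max_right _ _
    have hK0 : (0:ℝ) < K := lt_of_lt_of_le one_pos hK1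
    obtain ⟨N, hN⟩ : ∃ N, 2 * K < (2:ℝ) ^ N := pow_unbounded_of_one_lt (2 * K) one_lt_two
    have hN' : K ≤ (2:ℝ) ^ N / 2 := by linarith
    set T := ∑ i ∈ Finset.range N, 2 * K * b i / 2 ^ i with hT
    have hTi : ∀ i < N, 2 * K * b i / 2 ^ i ≤ T := by
      intro i hi
      exact Finset.single_le_sum (f := fun j => 2 * K * b j / 2 ^ j)
        (fun j _ => by have := hpos j; positivity)
        (Finset.mem_range.mpr hi)
    filter_upwards [eventually_ge_atTop (max T (0:ℝ))] with t ht
    have ht0 : (0:ℝ) ≤ t := le_trans (le_max_right _ _) ht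
    have htT : T ≤ t := le_trans (le_max_left _ _) ht
    refine le_trans (le_max_left M 1) (le_ciInf fun i => ?_)
    rcases lt_or_ge i N with hi | hi
    · have h1 : 2 * K * b i / 2 ^ i ≤ t := le_trans (hTi i hi) htT
      have hb := hpos i
      have hkey : K ≤ 2 ^ i * t / (2 * b i) := by
        rw [le_div_iff₀ (by positivity)]
        calc K * (2 * b i) = (2 * K * b i / 2 ^ i) * 2 ^ i := by
              field_simp
          _ ≤ t * 2 ^ i := by gcongr
          _ = 2 ^ i * t := mul_comm _ _
      have hp : (0:ℝ) ≤ (2:ℝ) ^ i / 2 := by positivity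
      simp only [hf]
      linarith
    · have hpow : (2:ℝ) ^ N ≤ 2 ^ i := pow_le_pow_right₀ one_le_two hi
      have ht' : (0:ℝ) ≤ 2 ^ i * t / (2 * b i) := by
        have := hpos i
        positivity
      simp only [hf]
      linarith
  · intro i
    refine (ciInf_le (hbdd (b i) (hpos i).le) i).trans (le_of_eq ?_)
    have hbne : (b i) ≠ 0 := (hpos i).ne'
    simp only [hf]
    field_simp
    ring
end

section
/- Let Ω ⊂ ℝ² be Lebesgue measurable with finite measure and let (y^l)_{l∈ℕ} ⊂ L¹(Ω; ℝ²) be a sequence satisfying |Ω \ ⋃_{n∈ℕ} ⋂_{l≥n} {x ∈ Ω : |y^n(x) − y^l(x)| ≤ 1}| = 0. Then there exist a subsequence (y^{l_j})_j, a constant C > 0, and an increasing continuous function ψ : [0,∞) → [0,∞) with lim_{t→∞} ψ(t) = ∞ such that ∫_Ω ψ(|y^{l_j}(x)|) dx ≤ C for all j ∈ ℕ. -/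
open Filter MeasureTheory
open scoped ENNReal

/-!
Off a null set, `|y^l(x)| ≤ |y^n(x)| + 1` for all `l ≥ n`, so `G = sup_l |y^l|` is finite a.e.
and no subsequence is needed: it suffices to find `ψ` with `ψ(G)` integrable. Take
`ψ = ∑_j ramp(t_j)`, where `ramp(a)` rises from `0` to `1` on `[a, a + 1]`; then
`∫ ψ(G) ≤ ∑_j μ{G > t_j}`, which is finite once the thresholds `t_j → ∞` are chosen with
`μ{G > t_j} ≤ 2^{-j}`.
-/

noncomputable def ramp (a s : ℝ) : ℝ := min (max (s - a) 0) 1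

noncomputable def rampSum (t : ℕ → ℝ) (s : ℝ) : ℝ := ∑' j, ramp (t j) s

lemma ramp_nonneg (a s : ℝ) : 0 ≤ ramp a s := le_min (le_max_right _ _) zero_le_one

lemma ramp_eq_zero {a s : ℝ} (h : s ≤ a) : ramp a s = 0 := by
  rw [ramp, max_eq_right (by linarith), min_eq_left zero_le_one]

lemma ramp_eq_one {a s : ℝ} (h : a + 1 ≤ s) : ramp a s = 1 := by
  rw [ramp, max_eq_left (by linarith), min_eq_right (by linarith)]

lemma monotone_ramp (a : ℝ) : Monotone (ramp a) := fun _ _ h => by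
  unfold ramp; gcongr

lemma continuous_ramp (a : ℝ) : Continuous (ramp a) := by
  unfold ramp; fun_prop

lemma ramp_le_one (a s : ℝ) : ramp a s ≤ 1 := min_le_right _ _

lemma rampSum_nonneg (t : ℕ → ℝ) (s : ℝ) : 0 ≤ rampSum t s :=
  tsum_nonneg fun _ => ramp_nonneg _ s

section rampSum

variable {t : ℕ → ℝ}

lemma rampSum_eq_sum_range {N : ℕ} {b s : ℝ} (hN : ∀ j ≥ N, b ≤ t j) (hs : s ≤ b) :
    rampSum t s = ∑ j ∈ Finset.range N, ramp (t j) s :=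
  tsum_eq_sum fun j hj => ramp_eq_zero (hs.trans (hN j (by simpa using hj)))

variable (ht : Tendsto t atTop atTop)
include ht

lemma summable_ramp (s : ℝ) : Summable fun j => ramp (t j) s := by
  obtain ⟨N, hN⟩ := eventually_atTop.1 (ht.eventually_ge_atTop s)
  exact summable_of_ne_finset_zero (s := Finset.range N) fun j hj =>
    ramp_eq_zero (hN j (by simpa using hj))

lemma monotone_rampSum : Monotone (rampSum t) := fun _ _ h =>
  (summable_ramp ht _).tsum_le_tsum (fun _ => monotone_ramp _ h) (summable_ramp ht _)

lemma continuous_rampSum : Continuous (rampSum t) := by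
  refine continuous_iff_continuousAt.2 fun a => ?_
  obtain ⟨N, hN⟩ := eventually_atTop.1 (ht.eventually_ge_atTop (a + 1))
  have hfin : (fun s => ∑ j ∈ Finset.range N, ramp (t j) s) =ᶠ[nhds a] rampSum t := by
    filter_upwards [Iio_mem_nhds (lt_add_one a)] with s hs
    exact (rampSum_eq_sum_range hN hs.le).symm
  exact (continuous_finsetSum _ fun j _ => continuous_ramp (t j)).continuousAt.congr hfin

lemma tendsto_rampSum_atTop : Tendsto (rampSum t) atTop atTop := by
  refine tendsto_atTop.2 fun b => ?_
  filter_upwards [(Finset.range ⌈b⌉₊).eventually_all.2 fun j _ =>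
    eventually_ge_atTop (t j + 1)] with s hs
  calc b ≤ ⌈b⌉₊ := Nat.le_ceil b
    _ = ∑ j ∈ Finset.range ⌈b⌉₊, ramp (t j) s := by
      simp [Finset.sum_congr rfl fun j hj => ramp_eq_one (hs j hj)]
    _ ≤ rampSum t s := (summable_ramp ht s).sum_le_tsum _ fun j _ => ramp_nonneg _ s

end rampSum

section Measure

variable {α : Type*} [MeasurableSpace α] {μ : Measure α} {f : α → ℝ}

lemma tendsto_measure_lt_atTop_zero [IsFiniteMeasure μ] (hf : AEMeasurable f μ) :
    Tendsto (fun n : ℕ => μ {x | (n : ℝ) < f x}) atTop (nhds 0) := by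
  have hempty : (⋂ n : ℕ, {x | (n : ℝ) < f x}) = ∅ :=
    Set.eq_empty_of_forall_notMem fun x hx =>
      (exists_nat_ge (f x)).elim fun n hn => (Set.mem_iInter.1 hx n).not_ge hn
  have hanti : Antitone fun n : ℕ => {x | (n : ℝ) < f x} :=
    fun m n hmn x (hx : (n : ℝ) < f x) => (Nat.cast_le.2 hmn).trans_lt hx
  have := tendsto_measure_iInter_atTop
    (fun n => nullMeasurableSet_lt aemeasurable_const hf) hanti ⟨0, measure_ne_top μ _⟩
  rwa [hempty, measure_empty] at this

lemma lintegral_rampSum_comp_le {t : ℕ → ℝ} (ht : Tendsto t atTop atTop)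
    (hf : AEMeasurable f μ) :
    ∫⁻ x, ENNReal.ofReal (rampSum t (f x)) ∂μ ≤ ∑' j, μ {x | t j < f x} := by
  have hsplit : ∀ s, ENNReal.ofReal (rampSum t s) = ∑' j, ENNReal.ofReal (ramp (t j) s) :=
    fun s => ENNReal.ofReal_tsum_of_nonneg (fun j => ramp_nonneg _ s) (summable_ramp ht s)
  simp_rw [hsplit]
  refine (lintegral_tsum fun j => ?_).trans_le (ENNReal.tsum_le_tsum fun j => ?_)
  · exact (continuous_ramp (t j)).measurable.ennreal_ofReal.comp_aemeasurable hf
  calc ∫⁻ x, ENNReal.ofReal (ramp (t j) (f x)) ∂μ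
      ≤ ∫⁻ x, {x | t j < f x}.indicator 1 x ∂μ := lintegral_mono fun x => by
        by_cases h : t j < f x
        · simpa [h] using ramp_le_one (t j) (f x)
        · simp [h, ramp_eq_zero (not_lt.1 h)]
    _ ≤ μ {x | t j < f x} := lintegral_indicator_one_le _

theorem exists_monotone_continuous_tendsto_integrable_comp [IsFiniteMeasure μ]
    (hf : AEMeasurable f μ) :
    ∃ ψ : ℝ → ℝ, (∀ s, 0 ≤ ψ s) ∧ Monotone ψ ∧ Continuous ψ ∧ Tendsto ψ atTop atTop ∧
      Integrable (fun x => ψ (f x)) μ := by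
  have hsmall : ∀ j : ℕ, ∃ n : ℕ, j ≤ n ∧ μ {x | (n : ℝ) < f x} ≤ 2⁻¹ ^ j := fun j =>
    ((eventually_ge_atTop j).and ((tendsto_measure_lt_atTop_zero hf).eventually
      (ge_mem_nhds (ENNReal.pow_pos (by norm_num) j)))).exists
  choose n hn hμn using hsmall
  have ht : Tendsto (fun j => (n j : ℝ)) atTop atTop :=
    tendsto_natCast_atTop_atTop.comp (tendsto_atTop_mono hn tendsto_id)
  refine ⟨rampSum fun j => n j, rampSum_nonneg _, monotone_rampSum ht, continuous_rampSum ht,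
    tendsto_rampSum_atTop ht,
    (continuous_rampSum ht).comp_aestronglyMeasurable hf.aestronglyMeasurable, ?_⟩
  rw [hasFiniteIntegral_iff_ofReal (Eventually.of_forall fun x => rampSum_nonneg _ _)]
  calc ∫⁻ x, ENNReal.ofReal (rampSum (fun j => n j) (f x)) ∂μ
      ≤ ∑' j, μ {x | (n j : ℝ) < f x} := lintegral_rampSum_comp_le ht hf
    _ ≤ ∑' j : ℕ, 2⁻¹ ^ j := ENNReal.tsum_le_tsum hμn
    _ = 2 := by rw [ENNReal.tsum_geometric, ENNReal.one_sub_inv_two, inv_inv]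
    _ < ⊤ := ENNReal.ofNat_lt_top

end Measure

lemma bddAbove_range_norm_of_norm_sub_le {E : Type*} [SeminormedAddGroup E] {u : ℕ → E}
    {n : ℕ} {c : ℝ} (h : ∀ l ≥ n, ‖u n - u l‖ ≤ c) : BddAbove (Set.range fun l => ‖u l‖) :=
  IsBoundedUnder.bddAbove_range ⟨‖u n‖ + c, eventually_map.2 <| eventually_atTop.2
    ⟨n, fun l hl => (norm_le_norm_add_norm_sub (u n) _).trans
      ((add_le_add_iff_left _).2 (h l hl))⟩⟩

/-- If a sequence `(y^l)_l ⊂ L¹(Ω; ℝ²)` satisfies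
`|Ω \ ⋃_n ⋂_{l ≥ n} {x ∈ Ω : |y^n(x) − y^l(x)| ≤ 1}| = 0`, then along a subsequence the
integrals `∫_Ω ψ(|y^{l_j}|)` are uniformly bounded for some increasing continuous
`ψ : [0,∞) → [0,∞)` tending to infinity. -/
theorem exists_subseq_uniform_integral_bound
    (Ω : Set (EuclideanSpace ℝ (Fin 2))) (hΩ : MeasurableSet Ω)
    (hfin : volume Ω < ⊤)
    (y : ℕ → EuclideanSpace ℝ (Fin 2) → EuclideanSpace ℝ (Fin 2))
    (hint : ∀ l, IntegrableOn (y l) Ω)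
    (hae : volume (Ω \ ⋃ n : ℕ, ⋂ l : ℕ, ⋂ _ : n ≤ l,
      {x ∈ Ω | ‖y n x - y l x‖ ≤ 1}) = 0) :
    ∃ l : ℕ → ℕ, StrictMono l ∧ ∃ C : ℝ, 0 < C ∧ ∃ ψ : ℝ → ℝ,
      (∀ t, 0 ≤ t → 0 ≤ ψ t) ∧
      MonotoneOn ψ (Set.Ici (0 : ℝ)) ∧
      ContinuousOn ψ (Set.Ici (0 : ℝ)) ∧
      Tendsto ψ atTop atTop ∧
      ∀ j : ℕ, ∫ x in Ω, ψ ‖y (l j) x‖ ≤ C := by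
  have : IsFiniteMeasure (volume.restrict Ω) := isFiniteMeasure_restrict.2 hfin.ne
  have hstable : ∀ᵐ x ∂volume.restrict Ω,
      x ∈ ⋃ n : ℕ, ⋂ l : ℕ, ⋂ _ : n ≤ l, {x ∈ Ω | ‖y n x - y l x‖ ≤ 1} := by
    rwa [Filter.Eventually, Set.ofPred_mem_eq, mem_ae_iff, Measure.restrict_apply' hΩ,
      ← Set.sdiff_eq_compl_inter]
  have hbdd : ∀ᵐ x ∂volume.restrict Ω, BddAbove (Set.range fun l => ‖y l x‖) :=
    hstable.mono fun x hx => by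
      obtain ⟨n, hn⟩ := Set.mem_iUnion.1 hx
      exact bddAbove_range_norm_of_norm_sub_le fun l hl => (Set.mem_iInter₂.1 hn l hl).2
  set G := fun x => ⨆ l, ‖y l x‖
  obtain ⟨ψ, hψ0, hψmono, hψcont, hψtop, hψint⟩ :=
    exists_monotone_continuous_tendsto_integrable_comp
      (AEMeasurable.iSup fun l => (hint l).aemeasurable.norm : AEMeasurable G _)
  refine ⟨id, strictMono_id, (∫ x in Ω, ψ (G x)) + 1,
    add_pos_of_nonneg_of_pos (integral_nonneg fun x => hψ0 _) one_pos, ψ, fun s _ => hψ0 s,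
    hψmono.monotoneOn _, hψcont.continuousOn, hψtop, fun j => ?_⟩
  calc ∫ x in Ω, ψ ‖y j x‖ ≤ ∫ x in Ω, ψ (G x) :=
        integral_mono_of_nonneg (.of_forall fun x => hψ0 _) hψint
          (hbdd.mono fun x hx => hψmono (le_ciSup hx j))
    _ ≤ _ := le_add_of_nonneg_right zero_le_one
end

section
/- Let R₁, R₂ ∈ SO(2). Then (i) for every x ∈ ℝ² one has |(R₁ − R₂)x| = (1/√2)‖R₁ − R₂‖·|x|, and (ii) if R₁ ≠ R₂, the matrix R₁ − R₂ is invertible. -/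
open Matrix

/-- The Frobenius norm of a real 2×2 matrix. -/
noncomputable def frobNorm (A : Matrix (Fin 2) (Fin 2) ℝ) : ℝ :=
  Real.sqrt (∑ i : Fin 2, ∑ j : Fin 2, (A i j) ^ 2)

/-- The Euclidean norm of a vector in ℝ². -/
noncomputable def evNorm (x : Fin 2 → ℝ) : ℝ :=
  Real.sqrt (∑ i : Fin 2, (x i) ^ 2)

lemma so2_struct (R : Matrix (Fin 2) (Fin 2) ℝ) (ho : Rᵀ * R = 1) (hd : R.det = 1) :
    R 1 1 = R 0 0 ∧ R 0 1 = -(R 1 0) := by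
  have h00 := congrFun (congrFun ho 0) 0
  have h11 := congrFun (congrFun ho 1) 1
  simp [Matrix.mul_apply, Matrix.transpose_apply, Fin.sum_univ_two, Matrix.one_apply] at h00 h11
  rw [Matrix.det_fin_two] at hd
  constructor <;>
    nlinarith [sq_nonneg (R 0 0 - R 1 1), sq_nonneg (R 0 1 + R 1 0), h00, h11, hd]

/-- For `R₁, R₂ ∈ SO(2)`: (i) `|(R₁ − R₂)x| = (1/√2)‖R₁ − R₂‖·|x|` for all `x ∈ ℝ²`,
and (ii) if `R₁ ≠ R₂` then `R₁ − R₂` is invertible. -/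
theorem SO2_diff_norm_and_invertible
    (R₁ R₂ : Matrix (Fin 2) (Fin 2) ℝ)
    (h₁ : R₁ᵀ * R₁ = 1 ∧ R₁.det = 1) (h₂ : R₂ᵀ * R₂ = 1 ∧ R₂.det = 1) :
    (∀ x : Fin 2 → ℝ,
      evNorm ((R₁ - R₂).mulVec x) = 1 / Real.sqrt 2 * frobNorm (R₁ - R₂) * evNorm x) ∧
    (R₁ ≠ R₂ → IsUnit (R₁ - R₂)) := by
  obtain ⟨s₁, t₁⟩ := so2_struct R₁ h₁.1 h₁.2
  obtain ⟨s₂, t₂⟩ := so2_struct R₂ h₂.1 h₂.2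
  set p : ℝ := R₁ 0 0 - R₂ 0 0 with hp
  set q : ℝ := R₁ 1 0 - R₂ 1 0 with hq
  have hD00 : (R₁ - R₂) 0 0 = p := rfl
  have hD10 : (R₁ - R₂) 1 0 = q := rfl
  have hD01 : (R₁ - R₂) 0 1 = -q := by
    rw [Matrix.sub_apply, t₁, t₂, hq]; ring
  have hD11 : (R₁ - R₂) 1 1 = p := by
    rw [Matrix.sub_apply, s₁, s₂, hp]
  constructor
  · intro x
    have hmv0 : (R₁ - R₂).mulVec x 0 = p * x 0 + -q * x 1 := by
      show ∑ j : Fin 2, (R₁ - R₂) 0 j * x j = _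
      rw [Fin.sum_univ_two, hD00, hD01]
    have hmv1 : (R₁ - R₂).mulVec x 1 = q * x 0 + p * x 1 := by
      show ∑ j : Fin 2, (R₁ - R₂) 1 j * x j = _
      rw [Fin.sum_univ_two, hD10, hD11]
    have hfe : evNorm ((R₁ - R₂).mulVec x)
        = Real.sqrt ((p ^ 2 + q ^ 2) * (x 0 ^ 2 + x 1 ^ 2)) := by
      rw [evNorm, Fin.sum_univ_two, hmv0, hmv1]
      ring_nf
    have hfr : frobNorm (R₁ - R₂) = Real.sqrt 2 * Real.sqrt (p ^ 2 + q ^ 2) := by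
      rw [frobNorm]
      rw [show (∑ i : Fin 2, ∑ j : Fin 2, ((R₁ - R₂) i j) ^ 2)
          = 2 * (p ^ 2 + q ^ 2) by
        simp only [Fin.sum_univ_two, hD00, hD01, hD10, hD11]; ring]
      rw [Real.sqrt_mul (by norm_num)]
    have hev : evNorm x = Real.sqrt (x 0 ^ 2 + x 1 ^ 2) := by
      rw [evNorm, Fin.sum_univ_two]
    rw [hfe, hfr, hev, Real.sqrt_mul (by positivity)]
    have h2 : Real.sqrt 2 ≠ 0 := by positivity
    field_simp
  · intro hne
    have hpq : p ≠ 0 ∨ q ≠ 0 := by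
      by_contra h
      push_neg at h
      apply hne
      have e00 : R₁ 0 0 = R₂ 0 0 := by have := h.1; rw [hp, sub_eq_zero] at this; exact this
      have e10 : R₁ 1 0 = R₂ 1 0 := by have := h.2; rw [hq, sub_eq_zero] at this; exact this
      have e01 : R₁ 0 1 = R₂ 0 1 := by rw [t₁, t₂, e10]
      have e11 : R₁ 1 1 = R₂ 1 1 := by rw [s₁, s₂, e00]
      ext i j
      fin_cases i <;> fin_cases j
      exacts [e00, e01, e10, e11]
    have hdet : (R₁ - R₂).det = p ^ 2 + q ^ 2 := by
      rw [Matrix.det_fin_two, hD00, hD01, hD10, hD11]; ring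
    rw [Matrix.isUnit_iff_isUnit_det, hdet, isUnit_iff_ne_zero]
    rcases hpq with h | h <;> positivity
end

section
/- Let R₁, R₂ ∈ SO(2) with R₁ ≠ R₂, let b ∈ ℝ², set R' := R₁ − R₂ and z := −(R')⁻¹ b. Then for every Lebesgue measurable set P ⊂ ℝ² and every λ > 0 one has (1/2)·‖R'‖²·λ²·|P \ B_λ(z)| ≤ ∫_P |R'x + b|² dx, where B_λ(z) denotes the open ball of radius λ centered at z. -/
/-!
A difference of two rotations of the plane is the matrix of multiplication by a complex number
`w = p + i q`; it therefore scales every length by `|w|`, with `|w|² = ‖R₁ - R₂‖² / 2`, and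
`w ≠ 0` when `R₁ ≠ R₂`. Hence `|R' x + b| = |w| |x - z|`, which is at least `|w| λ` off the ball
`B_λ(z)`, and the bound is Markov's inequality for this integrand on `P`.
-/

open Matrix MeasureTheory
open scoped ENNReal

/-- The matrix `!![p, -q; q, p]` of multiplication by the complex number `p + i q`. -/
def Matrix.IsComplexMul (A : Matrix (Fin 2) (Fin 2) ℝ) : Prop :=
  A 1 1 = A 0 0 ∧ A 0 1 = -A 1 0

namespace Matrix.IsComplexMul

variable {A B : Matrix (Fin 2) (Fin 2) ℝ}

theorem of_orthogonal_of_det_eq_one (ho : Aᵀ * A = 1) (hd : A.det = 1) : A.IsComplexMul := by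
  have e00 := congrFun (congrFun ho 0) 0
  have e01 := congrFun (congrFun ho 0) 1
  have e11 := congrFun (congrFun ho 1) 1
  simp only [mul_apply, Fin.sum_univ_two, transpose_apply, one_apply_eq,
    one_apply_ne zero_ne_one] at e00 e01 e11
  rw [det_fin_two] at hd
  constructor <;> nlinarith [sq_nonneg (A 0 0 - A 1 1), sq_nonneg (A 0 1 + A 1 0)]

theorem sub (hA : A.IsComplexMul) (hB : B.IsComplexMul) : (A - B).IsComplexMul := by
  simp only [IsComplexMul, sub_apply, hA.1, hA.2, hB.1, hB.2]
  exact ⟨trivial, by ring⟩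

theorem frobNorm_sq (hA : A.IsComplexMul) : frobNorm A ^ 2 = 2 * (A 0 0 ^ 2 + A 1 0 ^ 2) := by
  rw [frobNorm, Real.sq_sqrt (by positivity)]
  simp only [Fin.sum_univ_two, hA.1, hA.2]
  ring

theorem det_eq (hA : A.IsComplexMul) : A.det = A 0 0 ^ 2 + A 1 0 ^ 2 := by
  rw [det_fin_two, hA.1, hA.2]
  ring

theorem isUnit_det (hA : A.IsComplexMul) (hA0 : A ≠ 0) : IsUnit A.det := by
  refine isUnit_iff_ne_zero.mpr fun hdet => hA0 ?_
  rw [hA.det_eq] at hdet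
  have h00 : A 0 0 = 0 := by nlinarith [sq_nonneg (A 0 0), sq_nonneg (A 1 0)]
  have h10 : A 1 0 = 0 := by nlinarith [sq_nonneg (A 0 0), sq_nonneg (A 1 0)]
  ext i j
  fin_cases i <;> fin_cases j <;> simp [hA.1, hA.2, h00, h10]

theorem evNorm_mulVec_sq (hA : A.IsComplexMul) (v : Fin 2 → ℝ) :
    evNorm (A *ᵥ v) ^ 2 = 1 / 2 * frobNorm A ^ 2 * evNorm v ^ 2 := by
  rw [hA.frobNorm_sq, evNorm, evNorm, Real.sq_sqrt (by positivity), Real.sq_sqrt (by positivity)]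
  simp only [Fin.sum_univ_two, mulVec, dotProduct, hA.1, hA.2]
  ring

end Matrix.IsComplexMul

theorem Matrix.mulVec_sub_neg_inv_mulVec {n : Type*} [Fintype n] [DecidableEq n]
    {A : Matrix n n ℝ} (hA : IsUnit A.det) (x b : n → ℝ) :
    A *ᵥ (x - -(A⁻¹ *ᵥ b)) = A *ᵥ x + b := by
  rw [sub_neg_eq_add, mulVec_add, mulVec_mulVec, mul_nonsing_inv A hA, one_mulVec]

theorem MeasureTheory.mul_measure_le_setLIntegral_of_le {α : Type*} [MeasurableSpace α]
    {μ : Measure α} {f : α → ℝ≥0∞} {s t : Set α} {c : ℝ≥0∞} (hts : t ⊆ s)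
    (hf : AEMeasurable f (μ.restrict s)) (hc : ∀ x ∈ t, c ≤ f x) :
    c * μ t ≤ ∫⁻ x in s, f x ∂μ :=
  calc c * μ t ≤ c * μ.restrict s {x | c ≤ f x} := by
        gcongr c * ?_
        exact (measure_mono (fun x hx => ⟨hc x hx, hts hx⟩ : t ⊆ {x | c ≤ f x} ∩ s)).trans
          (Measure.le_restrict_apply _ _)
    _ ≤ ∫⁻ x in s, f x ∂μ := mul_meas_ge_le_lintegral₀ hf c

theorem continuous_evNorm : Continuous evNorm := by
  unfold evNorm
  fun_prop

theorem SO2_diff_lower_bound_general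
    (R₁ R₂ : Matrix (Fin 2) (Fin 2) ℝ)
    (h₁ : R₁ᵀ * R₁ = 1 ∧ R₁.det = 1) (h₂ : R₂ᵀ * R₂ = 1 ∧ R₂.det = 1)
    (hne : R₁ ≠ R₂) (b : Fin 2 → ℝ)
    (P : Set (Fin 2 → ℝ)) (lam : ℝ) (hlam : 0 < lam) :
    ENNReal.ofReal (1 / 2 * frobNorm (R₁ - R₂) ^ 2 * lam ^ 2) *
        volume (P \ {x : Fin 2 → ℝ | evNorm (x - (-(R₁ - R₂)⁻¹.mulVec b)) < lam}) ≤
      ∫⁻ x in P, ENNReal.ofReal ((evNorm ((R₁ - R₂).mulVec x + b)) ^ 2) := by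
  have hR : (R₁ - R₂).IsComplexMul :=
    (IsComplexMul.of_orthogonal_of_det_eq_one h₁.1 h₁.2).sub
      (IsComplexMul.of_orthogonal_of_det_eq_one h₂.1 h₂.2)
  have hdet : IsUnit (R₁ - R₂).det := hR.isUnit_det (sub_ne_zero.mpr hne)
  have hmeas : Measurable fun x => ENNReal.ofReal (evNorm ((R₁ - R₂) *ᵥ x + b) ^ 2) := by
    have := continuous_evNorm.measurable
    fun_prop
  refine mul_measure_le_setLIntegral_of_le Set.sdiff_subset hmeas.aemeasurable fun x hx => ?_
  have hfar : lam ≤ evNorm (x - -((R₁ - R₂)⁻¹ *ᵥ b)) := not_lt.mp hx.2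
  rw [← mulVec_sub_neg_inv_mulVec hdet, hR.evNorm_mulVec_sq]
  gcongr

/-- For distinct rotations `R₁, R₂ ∈ SO(2)`, `R' = R₁ − R₂`, `z = −(R')⁻¹b`:
`(1/2)‖R'‖²λ²·|P \ B_λ(z)| ≤ ∫_P |R'x + b|² dx` for every measurable `P ⊂ ℝ²`, `λ > 0`. -/
theorem SO2_diff_lower_bound
    (R₁ R₂ : Matrix (Fin 2) (Fin 2) ℝ)
    (h₁ : R₁ᵀ * R₁ = 1 ∧ R₁.det = 1) (h₂ : R₂ᵀ * R₂ = 1 ∧ R₂.det = 1)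
    (hne : R₁ ≠ R₂) (b : Fin 2 → ℝ)
    (P : Set (Fin 2 → ℝ)) (hP : MeasurableSet P) (lam : ℝ) (hlam : 0 < lam) :
    ENNReal.ofReal (1 / 2 * frobNorm (R₁ - R₂) ^ 2 * lam ^ 2) *
        volume (P \ {x : Fin 2 → ℝ | evNorm (x - (-(R₁ - R₂)⁻¹.mulVec b)) < lam}) ≤
      ∫⁻ x in P, ENNReal.ofReal ((evNorm ((R₁ - R₂).mulVec x + b)) ^ 2) :=
  SO2_diff_lower_bound_general R₁ R₂ h₁ h₂ hne b P lam hlam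
end

section
/- There exists a constant C > 0 such that for every F ∈ ℝ^{2×2} with ‖F‖ ≤ 1 one has |dist(Id + F, SO(2))² − ‖sym F‖²| ≤ C‖F‖³. -/
/-!
Writing `p = G₀₀ + G₁₁`, `q = G₁₀ - G₀₁`, a rotation `R` with first column `(x, z)` satisfies
`‖G - R‖² = ‖G‖² + 2 - 2 (p x + q z)`, so by Cauchy–Schwarz
`dist(G, SO(2))² = ‖G‖² + 2 - 2 √(p² + q²)`. For `G = Id + F`, with `t = tr F` and
`u = F₁₀ - F₀₁`, the difference `dist(Id + F, SO(2))² - ‖sym F‖²` becomes `A - 2r` where `A = 4 + 2t + u²/2` and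
`r = √((2 + t)² + u²)`. Now `A² - 4r² = 2tu² + u⁴/4` is cubic in `F`, while `A + 2r ≥ 1`
for `‖F‖ ≤ 1`.
-/

open Matrix

/-- The distance (in Frobenius norm) of a 2×2 matrix from `SO(2)`. -/
noncomputable def distSO2 (G : Matrix (Fin 2) (Fin 2) ℝ) : ℝ :=
  sInf ((fun R => frobNorm (G - R)) '' {R : Matrix (Fin 2) (Fin 2) ℝ | Rᵀ * R = 1 ∧ R.det = 1})

/-- The symmetric part of a 2×2 matrix. -/
noncomputable def symPart (F : Matrix (Fin 2) (Fin 2) ℝ) : Matrix (Fin 2) (Fin 2) ℝ :=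
  (1 / 2 : ℝ) • (F + Fᵀ)

lemma frobNorm_sq (A : Matrix (Fin 2) (Fin 2) ℝ) :
    frobNorm A ^ 2 = A 0 0 ^ 2 + A 0 1 ^ 2 + A 1 0 ^ 2 + A 1 1 ^ 2 := by
  rw [frobNorm, Real.sq_sqrt (by positivity)]
  simp only [Fin.sum_univ_two]
  ring

lemma frobNorm_nonneg (A : Matrix (Fin 2) (Fin 2) ℝ) : 0 ≤ frobNorm A :=
  Real.sqrt_nonneg _

def SO2 : Set (Matrix (Fin 2) (Fin 2) ℝ) := {R | Rᵀ * R = 1 ∧ R.det = 1}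

lemma eq_rotation_of_mem_SO2 {R : Matrix (Fin 2) (Fin 2) ℝ} (hR : R ∈ SO2) :
    R = !![R 0 0, -R 1 0; R 1 0, R 0 0] ∧ R 0 0 ^ 2 + R 1 0 ^ 2 = 1 := by
  obtain ⟨h1, h2⟩ := hR
  have e00 := congrFun (congrFun h1 0) 0
  have e01 := congrFun (congrFun h1 0) 1
  have e11 := congrFun (congrFun h1 1) 1
  simp only [mul_apply, Fin.sum_univ_two, transpose_apply, one_apply_eq,
    one_apply_ne zero_ne_one] at e00 e01 e11
  rw [det_fin_two] at h2
  have h11 : R 1 1 = R 0 0 := by nlinarith [sq_nonneg (R 0 1 + R 1 0), sq_nonneg (R 1 1 - R 0 0)]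
  have h01 : R 0 1 = -R 1 0 := by nlinarith [sq_nonneg (R 0 1 + R 1 0), sq_nonneg (R 1 1 - R 0 0)]
  refine ⟨?_, by nlinarith⟩
  ext i j
  fin_cases i <;> fin_cases j <;> simp [h11, h01]

lemma rotation_mem_SO2 {x z : ℝ} (h : x ^ 2 + z ^ 2 = 1) : !![x, -z; z, x] ∈ SO2 := by
  refine ⟨?_, by rw [det_fin_two_of]; linarith⟩
  ext i j
  fin_cases i <;> fin_cases j <;> simp [mul_apply] <;> linarith

lemma frobNorm_sub_rotation_sq (G : Matrix (Fin 2) (Fin 2) ℝ) {x z : ℝ} (h : x ^ 2 + z ^ 2 = 1) :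
    frobNorm (G - !![x, -z; z, x]) ^ 2 =
      frobNorm G ^ 2 + 2 - 2 * ((G 0 0 + G 1 1) * x + (G 1 0 - G 0 1) * z) := by
  simp only [frobNorm_sq, Matrix.sub_apply, of_apply, cons_val', cons_val_zero, cons_val_fin_one,
    cons_val_one, sub_neg_eq_add]
  linear_combination 2 * h

lemma exists_sq_add_sq_eq_one_mul_add_mul_eq_sqrt (p q : ℝ) :
    ∃ x z : ℝ, x ^ 2 + z ^ 2 = 1 ∧ p * x + q * z = √(p ^ 2 + q ^ 2) := by
  set r := √(p ^ 2 + q ^ 2)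
  have hr : r ^ 2 = p ^ 2 + q ^ 2 := Real.sq_sqrt (by positivity)
  rcases (Real.sqrt_nonneg _ : 0 ≤ r).eq_or_lt with hr0 | hr0
  · exact ⟨1, 0, by norm_num, by nlinarith⟩
  · have hr0 : r ≠ 0 := hr0.ne'
    refine ⟨p / r, q / r, ?_, ?_⟩ <;> field_simp <;> linarith

lemma mul_add_mul_le_sqrt {p q x z : ℝ} (h : x ^ 2 + z ^ 2 = 1) :
    p * x + q * z ≤ √(p ^ 2 + q ^ 2) :=
  Real.le_sqrt_of_sq_le (by nlinarith [sq_nonneg (p * z - q * x)])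

theorem distSO2_sq (G : Matrix (Fin 2) (Fin 2) ℝ) :
    distSO2 G ^ 2 =
      frobNorm G ^ 2 + 2 - 2 * √((G 0 0 + G 1 1) ^ 2 + (G 1 0 - G 0 1) ^ 2) := by
  obtain ⟨x, z, hxz, hopt⟩ :=
    exists_sq_add_sq_eq_one_mul_add_mul_eq_sqrt (G 0 0 + G 1 1) (G 1 0 - G 0 1)
  suffices distSO2 G = frobNorm (G - !![x, -z; z, x]) by
    rw [this, frobNorm_sub_rotation_sq G hxz, hopt]
  refine IsLeast.csInf_eq ⟨⟨_, rotation_mem_SO2 hxz, rfl⟩, ?_⟩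
  rintro _ ⟨R, hR, rfl⟩
  obtain ⟨hR, hR1⟩ := eq_rotation_of_mem_SO2 hR
  have hsq := frobNorm_sub_rotation_sq G hR1
  rw [← hR] at hsq
  refine (pow_le_pow_iff_left₀ (frobNorm_nonneg _) (frobNorm_nonneg _) two_ne_zero).1 ?_
  rw [hsq, frobNorm_sub_rotation_sq G hxz, hopt]
  linarith [mul_add_mul_le_sqrt (p := G 0 0 + G 1 1) (q := G 1 0 - G 0 1) hR1]

lemma distSO2_one_add_sq_sub_frobNorm_symPart_sq (F : Matrix (Fin 2) (Fin 2) ℝ) :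
    distSO2 (1 + F) ^ 2 - frobNorm (symPart F) ^ 2 =
      4 + 2 * (F 0 0 + F 1 1) + (F 1 0 - F 0 1) ^ 2 / 2 -
        2 * √((2 + (F 0 0 + F 1 1)) ^ 2 + (F 1 0 - F 0 1) ^ 2) := by
  rw [distSO2_sq, frobNorm_sq, frobNorm_sq]
  simp only [symPart, Matrix.add_apply, Matrix.smul_apply, transpose_apply, one_apply, smul_eq_mul,
    ↓reduceIte, zero_ne_one, one_ne_zero]
  ring_nf

lemma abs_sub_le_abs_sq_sub_sq {x y : ℝ} (h : 1 ≤ x + y) : |x - y| ≤ |x ^ 2 - y ^ 2| := by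
  rw [sq_sub_sq, abs_mul, abs_of_nonneg (by linarith : 0 ≤ x + y)]
  exact le_mul_of_one_le_left (abs_nonneg _) h

lemma abs_four_add_two_mul_add_sub_two_sqrt_le {t u n : ℝ} (hn0 : 0 ≤ n) (hn1 : n ≤ 1)
    (ht : t ^ 2 ≤ 2 * n ^ 2) (hu : u ^ 2 ≤ 2 * n ^ 2) :
    |4 + 2 * t + u ^ 2 / 2 - 2 * √((2 + t) ^ 2 + u ^ 2)| ≤ 9 * n ^ 3 := by
  set r := √((2 + t) ^ 2 + u ^ 2)
  have hr : r ^ 2 = (2 + t) ^ 2 + u ^ 2 := Real.sq_sqrt (by positivity)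
  have hr0 : 0 ≤ r := Real.sqrt_nonneg _
  have ht_ge : -3 / 2 ≤ t := by nlinarith
  have ht_abs : |t| ≤ 2 * n := abs_le_of_sq_le_sq (by nlinarith) (by positivity)
  have htu : |t| * u ^ 2 ≤ 2 * n * (2 * n ^ 2) :=
    mul_le_mul ht_abs hu (sq_nonneg u) (by positivity)
  have hu4 : u ^ 4 ≤ 4 * n ^ 3 := by
    nlinarith [pow_le_pow_left₀ (sq_nonneg u) hu 2,
      mul_le_mul_of_nonneg_left hn1 (pow_nonneg hn0 3)]
  calc |4 + 2 * t + u ^ 2 / 2 - 2 * r|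
      ≤ |(4 + 2 * t + u ^ 2 / 2) ^ 2 - (2 * r) ^ 2| := abs_sub_le_abs_sq_sub_sq (by nlinarith)
    _ = |2 * t * u ^ 2 + u ^ 4 / 4| := by rw [mul_pow, hr]; ring_nf
    _ ≤ 2 * |t| * u ^ 2 + u ^ 4 / 4 := by
        refine (abs_add_le _ _).trans ?_
        rw [abs_of_nonneg (by positivity : (0 : ℝ) ≤ u ^ 4 / 4)]
        simp [abs_mul]
    _ ≤ 9 * n ^ 3 := by linarith

/-- There is `C > 0` such that for all `F` with `‖F‖ ≤ 1`,
`|dist(Id + F, SO(2))² − ‖sym F‖²| ≤ C‖F‖³`. -/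
theorem dist_sq_sub_symPart_sq_le :
    ∃ C : ℝ, 0 < C ∧ ∀ F : Matrix (Fin 2) (Fin 2) ℝ, frobNorm F ≤ 1 →
      |distSO2 (1 + F) ^ 2 - frobNorm (symPart F) ^ 2| ≤ C * frobNorm F ^ 3 := by
  refine ⟨9, by norm_num, fun F hF => ?_⟩
  have hF2 := frobNorm_sq F
  rw [distSO2_one_add_sq_sub_frobNorm_symPart_sq]
  exact abs_four_add_two_mul_add_sub_two_sqrt_le (frobNorm_nonneg F) hF
    (by nlinarith [sq_nonneg (F 0 0 - F 1 1), sq_nonneg (F 0 1), sq_nonneg (F 1 0)])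
    (by nlinarith [sq_nonneg (F 0 1 + F 1 0), sq_nonneg (F 0 0), sq_nonneg (F 1 1)])
end

section
/- There exists a constant C > 0 such that for every G ∈ ℝ^{2×2} and every R ∈ SO(2) with ‖G − R‖ ≤ 1 one has |‖sym(RᵀG − Id)‖ − dist(G, SO(2))| ≤ C‖G − R‖². -/
open Matrix

noncomputable def rot (c s : ℝ) : Matrix (Fin 2) (Fin 2) ℝ := !![c, -s; s, c]

lemma frobNorm_eq (A : Matrix (Fin 2) (Fin 2) ℝ) :
    frobNorm A = Real.sqrt (A 0 0 ^ 2 + A 0 1 ^ 2 + A 1 0 ^ 2 + A 1 1 ^ 2) := by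
  unfold frobNorm
  congr 1
  simp [Fin.sum_univ_two]
  ring

lemma sqrt_add_four_le (a0 a1 a2 a3 b0 b1 b2 b3 : ℝ) :
    Real.sqrt ((a0+b0)^2+(a1+b1)^2+(a2+b2)^2+(a3+b3)^2) ≤
      Real.sqrt (a0^2+a1^2+a2^2+a3^2) + Real.sqrt (b0^2+b1^2+b2^2+b3^2) := by
  set A := a0^2+a1^2+a2^2+a3^2 with hA
  set B := b0^2+b1^2+b2^2+b3^2 with hB
  have hA0 : 0 ≤ A := by positivity
  have hB0 : 0 ≤ B := by positivity
  have hcs : (a0*b0+a1*b1+a2*b2+a3*b3)^2 ≤ A*B := by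
    rw [hA, hB]
    nlinarith [sq_nonneg (a0*b1-a1*b0), sq_nonneg (a0*b2-a2*b0), sq_nonneg (a0*b3-a3*b0),
      sq_nonneg (a1*b2-a2*b1), sq_nonneg (a1*b3-a3*b1), sq_nonneg (a2*b3-a3*b2)]
  have hdot : a0*b0+a1*b1+a2*b2+a3*b3 ≤ Real.sqrt A * Real.sqrt B := by
    calc a0*b0+a1*b1+a2*b2+a3*b3 ≤ |a0*b0+a1*b1+a2*b2+a3*b3| := le_abs_self _
    _ = Real.sqrt ((a0*b0+a1*b1+a2*b2+a3*b3)^2) := (Real.sqrt_sq_eq_abs _).symm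
    _ ≤ Real.sqrt (A*B) := Real.sqrt_le_sqrt hcs
    _ = Real.sqrt A * Real.sqrt B := Real.sqrt_mul hA0 B
  have e1 : Real.sqrt A ^ 2 = A := Real.sq_sqrt hA0
  have e2 : Real.sqrt B ^ 2 = B := Real.sq_sqrt hB0
  have h1 : (a0+b0)^2+(a1+b1)^2+(a2+b2)^2+(a3+b3)^2 ≤ (Real.sqrt A + Real.sqrt B)^2 := by
    nlinarith [hdot, e1, e2, hA, hB]
  calc Real.sqrt ((a0+b0)^2+(a1+b1)^2+(a2+b2)^2+(a3+b3)^2)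
      ≤ Real.sqrt ((Real.sqrt A + Real.sqrt B)^2) := Real.sqrt_le_sqrt h1
  _ = Real.sqrt A + Real.sqrt B := Real.sqrt_sq (by positivity)

lemma frobNorm_add_le (A B : Matrix (Fin 2) (Fin 2) ℝ) :
    frobNorm (A + B) ≤ frobNorm A + frobNorm B := by
  rw [frobNorm_eq, frobNorm_eq, frobNorm_eq]
  simpa [Matrix.add_apply] using
    sqrt_add_four_le (A 0 0) (A 0 1) (A 1 0) (A 1 1) (B 0 0) (B 0 1) (B 1 0) (B 1 1)

lemma frobNorm_neg (A : Matrix (Fin 2) (Fin 2) ℝ) : frobNorm (-A) = frobNorm A := by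
  rw [frobNorm_eq, frobNorm_eq]
  congr 1
  simp [Matrix.neg_apply]

lemma frobNorm_sub_le (A B : Matrix (Fin 2) (Fin 2) ℝ) :
    frobNorm (A - B) ≤ frobNorm A + frobNorm B := by
  rw [sub_eq_add_neg]
  calc frobNorm (A + -B) ≤ frobNorm A + frobNorm (-B) := frobNorm_add_le _ _
  _ = frobNorm A + frobNorm B := by rw [frobNorm_neg]

lemma so2_form {R : Matrix (Fin 2) (Fin 2) ℝ} (h1 : Rᵀ * R = 1) (h2 : R.det = 1) :
    ∃ c s : ℝ, c^2 + s^2 = 1 ∧ R = rot c s := by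
  have e00 := congrFun (congrFun h1 0) 0
  have e11 := congrFun (congrFun h1 1) 1
  simp [Matrix.mul_apply, Fin.sum_univ_two, Matrix.one_apply] at e00 e11
  rw [Matrix.det_fin_two] at h2
  refine ⟨R 0 0, R 1 0, by linear_combination e00, ?_⟩
  have key : (R 0 1 + R 1 0)^2 + (R 1 1 - R 0 0)^2 = 0 := by
    linear_combination e00 + e11 - 2*h2
  have k1' : (R 0 1 + R 1 0)^2 = 0 := by nlinarith [sq_nonneg (R 1 1 - R 0 0), sq_nonneg (R 0 1 + R 1 0)]
  have k2' : (R 1 1 - R 0 0)^2 = 0 := by nlinarith [sq_nonneg (R 1 1 - R 0 0), sq_nonneg (R 0 1 + R 1 0)]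
  have k1 : R 0 1 = - R 1 0 := by have := sq_eq_zero_iff.mp k1'; linarith
  have k2 : R 1 1 = R 0 0 := by have := sq_eq_zero_iff.mp k2'; linarith
  ext i j
  fin_cases i <;> fin_cases j <;> simp [rot, k1, k2]

lemma transpose_rot (c s : ℝ) : (rot c s)ᵀ = rot c (-s) := by
  ext i j
  fin_cases i <;> fin_cases j <;> simp [rot]

lemma frobNorm_rot_mul {c s : ℝ} (hcs : c^2+s^2=1) (M : Matrix (Fin 2) (Fin 2) ℝ) :
    frobNorm (rot c s * M) = frobNorm M := by
  rw [frobNorm_eq, frobNorm_eq]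
  congr 1
  simp [rot, Matrix.mul_apply, Fin.sum_univ_two]
  linear_combination (M 0 0^2 + M 0 1^2 + M 1 0^2 + M 1 1^2) * hcs

lemma frobNorm_symPart_le (A : Matrix (Fin 2) (Fin 2) ℝ) :
    frobNorm (symPart A) ≤ frobNorm A := by
  rw [frobNorm_eq, frobNorm_eq]
  apply Real.sqrt_le_sqrt
  simp [symPart, Matrix.add_apply, Matrix.smul_apply, Matrix.transpose_apply, smul_eq_mul]
  nlinarith [sq_nonneg (A 0 1 - A 1 0)]

lemma frobNorm_smul_one (t : ℝ) :
    frobNorm (t • (1 : Matrix (Fin 2) (Fin 2) ℝ)) = Real.sqrt 2 * |t| := by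
  rw [frobNorm_eq]
  have : (t • (1 : Matrix (Fin 2) (Fin 2) ℝ)) 0 0 ^2 + (t • (1 : Matrix (Fin 2) (Fin 2) ℝ)) 0 1^2
      + (t • (1 : Matrix (Fin 2) (Fin 2) ℝ)) 1 0^2 + (t • (1 : Matrix (Fin 2) (Fin 2) ℝ)) 1 1^2
      = 2 * t^2 := by
    simp [Matrix.smul_apply, Matrix.one_apply, smul_eq_mul]
    ring
  rw [this, Real.sqrt_mul (by norm_num), Real.sqrt_sq_eq_abs]

lemma symPart_apply (F : Matrix (Fin 2) (Fin 2) ℝ) (i j : Fin 2) :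
    symPart F i j = (1/2) * (F i j + F j i) := by
  simp [symPart, Matrix.add_apply, Matrix.smul_apply, Matrix.transpose_apply, smul_eq_mul]

lemma rot_orth {c s : ℝ} (hcs : c^2+s^2=1) : (rot c s)ᵀ * rot c s = 1 := by
  rw [transpose_rot]
  ext i j
  fin_cases i <;> fin_cases j <;>
    simp [rot, Matrix.mul_apply, Fin.sum_univ_two, Matrix.one_apply] <;>
    linarith [hcs]

lemma rot_det {c s : ℝ} (hcs : c^2+s^2=1) : (rot c s).det = 1 := by
  rw [Matrix.det_fin_two]
  simp [rot]
  linear_combination hcs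

lemma idA (A : Matrix (Fin 2) (Fin 2) ℝ) (p : ℝ) :
    A + 1 - rot p ((A 1 0 - A 0 1)/2) = symPart A + (1 - p) • (1 : Matrix (Fin 2) (Fin 2) ℝ) := by
  ext i j
  fin_cases i <;> fin_cases j <;>
    simp [rot, symPart_apply, Matrix.add_apply, Matrix.sub_apply, Matrix.one_apply,
      Matrix.smul_apply, smul_eq_mul] <;> ring

lemma idB (A : Matrix (Fin 2) (Fin 2) ℝ) (c' s' : ℝ) :
    symPart (A + 1 - rot c' s') = symPart A + (1 - c') • (1 : Matrix (Fin 2) (Fin 2) ℝ) := by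
  ext i j
  fin_cases i <;> fin_cases j <;>
    simp [rot, symPart_apply, Matrix.add_apply, Matrix.sub_apply, Matrix.one_apply,
      Matrix.smul_apply, smul_eq_mul] <;> ring

/-- There is `C > 0` such that for every `G ∈ ℝ^{2×2}` and `R ∈ SO(2)` with `‖G − R‖ ≤ 1`,
`|‖sym(RᵀG − Id)‖ − dist(G, SO(2))| ≤ C‖G − R‖²`. -/
theorem abs_symPart_sub_dist_le :
    ∃ C : ℝ, 0 < C ∧ ∀ G R : Matrix (Fin 2) (Fin 2) ℝ,
      Rᵀ * R = 1 → R.det = 1 → frobNorm (G - R) ≤ 1 →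
      |frobNorm (symPart (Rᵀ * G - 1)) - distSO2 G| ≤ C * frobNorm (G - R) ^ 2 := by
  refine ⟨4, by norm_num, ?_⟩
  intro G R hR1 hdet hle
  obtain ⟨c, s, hcs, hRform⟩ := so2_form hR1 hdet
  set E := Rᵀ * G - 1 with hE
  set δ := frobNorm (G - R) with hδ
  set e := frobNorm (symPart E) with he
  clear_value E δ e
  have hδ0 : 0 ≤ δ := by rw [hδ]; exact frobNorm_nonneg _
  have hδ1 : δ ≤ 1 := hle
  have he0 : 0 ≤ e := by rw [he]; exact frobNorm_nonneg _
  have hRT : Rᵀ = rot c (-s) := by rw [hRform, transpose_rot]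
  have hcs' : c^2 + (-s)^2 = 1 := by linear_combination hcs
  have hinv : ∀ M, frobNorm (Rᵀ * M) = frobNorm M := fun M => by
    rw [hRT]; exact frobNorm_rot_mul hcs' M
  have hEδ : frobNorm E = δ := by
    have hEe : E = Rᵀ * (G - R) := by rw [hE, Matrix.mul_sub, hR1]
    rw [hEe, hinv, hδ]
  have hδsq : E 0 0^2 + E 0 1^2 + E 1 0^2 + E 1 1^2 = δ^2 := by
    have h := hEδ
    rw [frobNorm_eq] at h
    have h2 := Real.sq_sqrt (show (0:ℝ) ≤ E 0 0^2 + E 0 1^2 + E 1 0^2 + E 1 1^2 by positivity)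
    rw [h] at h2
    exact h2.symm
  set d := sInf ((fun Q => frobNorm (G - Q)) ''
      {Q : Matrix (Fin 2) (Fin 2) ℝ | Qᵀ * Q = 1 ∧ Q.det = 1}) with hdset
  have hdd : distSO2 G = d := rfl
  have hbdd : BddBelow ((fun Q => frobNorm (G - Q)) ''
      {Q : Matrix (Fin 2) (Fin 2) ℝ | Qᵀ * Q = 1 ∧ Q.det = 1}) := by
    refine ⟨0, ?_⟩
    rintro x ⟨Q, hQ, rfl⟩
    exact frobNorm_nonneg _
  have hne : ((fun Q => frobNorm (G - Q)) ''
      {Q : Matrix (Fin 2) (Fin 2) ℝ | Qᵀ * Q = 1 ∧ Q.det = 1}).Nonempty :=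
    ⟨δ, R, ⟨hR1, hdet⟩, hδ.symm⟩
  clear_value d
  have hdδ : d ≤ δ := by
    rw [hdset, hδ]; exact csInf_le hbdd ⟨R, ⟨hR1, hdet⟩, rfl⟩
  have hd0 : 0 ≤ d := by
    rw [hdset]
    exact le_csInf hne (by rintro x ⟨Q, hQ, rfl⟩; exact frobNorm_nonneg _)
  have hδsq1 : δ^2 ≤ 1 := by nlinarith only [hδ0, hδ1]
  have hs2 : Real.sqrt 2 ≤ 2 := by
    nlinarith only [Real.sq_sqrt (show (0:ℝ) ≤ 2 by norm_num), Real.sqrt_nonneg 2]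
  -- upper bound : d ≤ e + δ²
  set ω := (E 1 0 - E 0 1)/2 with hω
  clear_value ω
  have hω2 : ω^2 ≤ δ^2/2 := by
    rw [hω]
    nlinarith only [sq_nonneg (E 1 0 + E 0 1), sq_nonneg (E 0 0), sq_nonneg (E 1 1), hδsq]
  have hω1 : ω^2 ≤ 1/2 := by linarith only [hω2, hδsq1]
  set p := Real.sqrt (1 - ω^2) with hp
  clear_value p
  have hp2 : p^2 = 1 - ω^2 := by
    rw [hp]; exact Real.sq_sqrt (by linarith only [hω1])
  have hcsP : p^2 + ω^2 = 1 := by rw [hp2]; ring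
  have hp0 : 0 ≤ p := by rw [hp]; exact Real.sqrt_nonneg _
  have hp1 : p ≤ 1 := by nlinarith only [hp2, hp0, sq_nonneg ω]
  have h1p : 1 - p ≤ ω^2 := by
    have h' : 1 - ω^2 ≤ p := by
      rw [hp]
      have h'' := Real.sqrt_le_sqrt
        (show (1-ω^2)^2 ≤ 1-ω^2 by nlinarith only [hω1, sq_nonneg ω])
      rwa [Real.sqrt_sq (by linarith only [hω1])] at h''
    linarith only [h']
  have horthQ : (R * rot p ω)ᵀ * (R * rot p ω) = 1 := by
    rw [Matrix.transpose_mul, Matrix.mul_assoc, ← Matrix.mul_assoc Rᵀ R (rot p ω), hR1,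
      Matrix.one_mul, rot_orth hcsP]
  have hdetQ : (R * rot p ω).det = 1 := by
    rw [Matrix.det_mul, hdet, rot_det hcsP, one_mul]
  have hup : d ≤ e + δ^2 := by
    have h1 : d ≤ frobNorm (G - R * rot p ω) := by
      rw [hdset]; exact csInf_le hbdd ⟨_, ⟨horthQ, hdetQ⟩, rfl⟩
    have h2 : frobNorm (G - R * rot p ω) = frobNorm (E + 1 - rot p ω) := by
      rw [← hinv (G - R * rot p ω)]
      congr 1
      rw [Matrix.mul_sub, ← Matrix.mul_assoc, hR1, Matrix.one_mul, hE]
      abel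
    have h3 : E + 1 - rot p ω = symPart E + (1-p) • (1 : Matrix (Fin 2) (Fin 2) ℝ) := by
      rw [hω]; exact idA E p
    have h4 : frobNorm (symPart E + (1-p) • (1 : Matrix (Fin 2) (Fin 2) ℝ))
        ≤ e + Real.sqrt 2 * |1-p| := by
      calc frobNorm (symPart E + (1-p) • (1 : Matrix (Fin 2) (Fin 2) ℝ))
          ≤ frobNorm (symPart E) + frobNorm ((1-p) • (1 : Matrix (Fin 2) (Fin 2) ℝ)) :=
            frobNorm_add_le _ _
      _ = e + Real.sqrt 2 * |1-p| := by rw [frobNorm_smul_one, he]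
    have h5 : Real.sqrt 2 * |1-p| ≤ δ^2 := by
      rw [abs_of_nonneg (by linarith only [hp1] : (0:ℝ) ≤ 1-p)]
      nlinarith only [Real.sqrt_nonneg 2, h1p, hω2, hp1, hs2]
    rw [h2, h3] at h1
    linarith only [h1, h4, h5]
  -- lower bound : e ≤ d + 2 δ² (via ε-argument)
  have hlow : ∀ ε : ℝ, 0 < ε → ε ≤ 1 → e ≤ d + 2*δ^2 + 4*ε := by
    intro ε hε hε1
    obtain ⟨x, ⟨Q, ⟨hQo, hQd⟩, rfl⟩, hx⟩ :=
      (csInf_lt_iff hbdd hne).mp (show _ < d + ε by rw [← hdset]; linarith only [hε])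
    -- hx : frobNorm (G - Q) < d + ε
    have hP'o : (Rᵀ * Q)ᵀ * (Rᵀ * Q) = 1 := by
      rw [Matrix.transpose_mul, Matrix.transpose_transpose, Matrix.mul_assoc,
        ← Matrix.mul_assoc R Rᵀ Q, mul_eq_one_comm.mp hR1, Matrix.one_mul, hQo]
    have hP'd : (Rᵀ * Q).det = 1 := by
      rw [Matrix.det_mul, Matrix.det_transpose, hdet, hQd, one_mul]
    obtain ⟨c', s', hcs2, hP'⟩ := so2_form hP'o hP'd
    have hc'le : c' ≤ 1 := by nlinarith only [sq_nonneg s', hcs2]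
    have hfqE : frobNorm (E + 1 - rot c' s') = frobNorm (G - Q) := by
      rw [← hinv (G - Q)]
      congr 1
      rw [Matrix.mul_sub, hE, ← hP']
      abel
    have hid := idB E c' s'
    have hsym : e ≤ frobNorm (symPart (E + 1 - rot c' s')) + Real.sqrt 2 * (1 - c') := by
      have hEid : symPart E = symPart (E + 1 - rot c' s')
          - (1-c') • (1 : Matrix (Fin 2) (Fin 2) ℝ) := by
        rw [hid]; abel
      rw [he, hEid]
      calc frobNorm (symPart (E + 1 - rot c' s') - (1-c') • (1 : Matrix (Fin 2) (Fin 2) ℝ))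
          ≤ frobNorm (symPart (E + 1 - rot c' s'))
            + frobNorm ((1-c') • (1 : Matrix (Fin 2) (Fin 2) ℝ)) := frobNorm_sub_le _ _
      _ = frobNorm (symPart (E + 1 - rot c' s')) + Real.sqrt 2 * |1-c'| := by
          rw [frobNorm_smul_one]
      _ = frobNorm (symPart (E + 1 - rot c' s')) + Real.sqrt 2 * (1-c') := by
          rw [abs_of_nonneg (by linarith only [hc'le] : (0:ℝ) ≤ 1-c')]
    have hsymle : frobNorm (symPart (E + 1 - rot c' s')) ≤ frobNorm (G - Q) := by
      rw [← hfqE]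
      exact frobNorm_symPart_le _
    have hfrot : frobNorm ((1 : Matrix (Fin 2) (Fin 2) ℝ) - rot c' s')
        = Real.sqrt (4*(1-c')) := by
      rw [frobNorm_eq]
      congr 1
      simp [rot, Matrix.sub_apply, Matrix.one_apply]
      linear_combination 2*hcs2
    have htri : frobNorm ((1 : Matrix (Fin 2) (Fin 2) ℝ) - rot c' s')
        ≤ frobNorm (G - Q) + δ := by
      have hidE : (1 : Matrix (Fin 2) (Fin 2) ℝ) - rot c' s' = (E + 1 - rot c' s') - E := by
        abel
      rw [hidE]
      calc frobNorm ((E + 1 - rot c' s') - E)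
          ≤ frobNorm (E + 1 - rot c' s') + frobNorm E := frobNorm_sub_le _ _
      _ = frobNorm (G - Q) + δ := by rw [hfqE, hEδ]
    have h4c : 4*(1-c') ≤ (2*δ + ε)^2 := by
      have h0 : (0:ℝ) ≤ 4*(1-c') := by linarith only [hc'le]
      have hb : Real.sqrt (4*(1-c')) ≤ 2*δ + ε := by
        rw [← hfrot]
        linarith only [htri, hx, hdδ]
      nlinarith only [Real.sq_sqrt h0, Real.sqrt_nonneg (4*(1-c')), hb]
    have ha : Real.sqrt 2 * (1-c') ≤ 2*(1-c') := by
      nlinarith only [mul_nonneg (show (0:ℝ) ≤ 2 - Real.sqrt 2 by linarith only [hs2])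
        (show (0:ℝ) ≤ 1-c' by linarith only [hc'le])]
    have hb2 : 2*(1-c') ≤ 2*δ^2 + 2*δ*ε + ε^2/2 := by nlinarith only [h4c]
    have hc2 : 2*δ*ε + ε^2/2 ≤ 3*ε := by
      nlinarith only [mul_nonneg (show (0:ℝ) ≤ 1-δ by linarith only [hδ1]) hε.le,
        mul_nonneg (show (0:ℝ) ≤ 1-ε by linarith only [hε1]) hε.le]
    linarith only [hsym, hsymle, hx, ha, hb2, hc2, hε.le]
  have hlow' : e ≤ d + 2*δ^2 := by
    by_contra hcon
    push_neg at hcon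
    have hε0 : 0 < min 1 ((e - d - 2*δ^2)/8) := lt_min one_pos (by linarith only [hcon])
    have hε1 : min 1 ((e - d - 2*δ^2)/8) ≤ 1 := min_le_left _ _
    have h := hlow _ hε0 hε1
    have h8 : min 1 ((e - d - 2*δ^2)/8) ≤ (e - d - 2*δ^2)/8 := min_le_right _ _
    linarith only [h, h8, hcon]
  rw [hdd, abs_le]
  constructor
  · linarith only [hup, sq_nonneg δ]
  · linarith only [hlow', sq_nonneg δ]
end

section
/- Let W : ℝ^{2×2} → [0,∞) be continuous, twice continuously differentiable on a neighborhood of SO(2), frame indifferent (W(RF) = W(F) for all R ∈ SO(2) and F ∈ ℝ^{2×2}), and satisfy W(F) = 0 if and only if F ∈ SO(2). Then the quadratic form Q(F) := D²W(Id)[F,F] satisfies Q(F) = Q(sym F) for every F ∈ ℝ^{2×2}; in particular Q vanishes on skew-symmetric matrices. -/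
open Matrix

attribute [local instance] Matrix.normedAddCommGroup Matrix.normedSpace

/-- The quadratic form `Q(F) = D²W(Id)[F,F]` associated to the Hessian of `W` at the
identity matrix. -/
noncomputable def hessQ (W : Matrix (Fin 2) (Fin 2) ℝ → ℝ)
    (F : Matrix (Fin 2) (Fin 2) ℝ) : ℝ :=
  fderiv ℝ (fderiv ℝ W) 1 F F

/-!
Differentiating frame indifference `W (R_θ F) = W F` in `θ` gives `DW(F)[J F] = 0` for all
`F` near `Id`, where `J` generates the rotations `R_θ = cos θ • Id + sin θ • J`. Differentiating
this once more at the minimum `Id`, where `DW(Id) = 0`, gives `D²W(Id)[X, J] = 0` for every `X`.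
So `J` lies in the kernel of the symmetric form `D²W(Id)`, and `Q(S + a J) = Q(S)`; every `F` is
`sym F` plus a multiple of `J`.
-/

open Filter Topology

section Calculus

variable {E F : Type*} [NormedAddCommGroup E] [NormedSpace ℝ E]
  [NormedAddCommGroup F] [NormedSpace ℝ F] {W : E → F} {x v : E}

theorem fderiv_apply_eq_zero_of_comp_eq_const {c : ℝ → E} (hW : DifferentiableAt ℝ W x)
    (hc : HasDerivAt c v 0) (hc0 : c 0 = x) (hconst : ∀ t, W (c t) = W x) :
    fderiv ℝ W x v = 0 := by
  subst hc0
  have hcomp := hW.hasFDerivAt.comp_hasDerivAt 0 hc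
  rw [show W ∘ c = fun _ => W (c 0) from funext hconst] at hcomp
  exact (hasDerivAt_const 0 (W (c 0))).unique hcomp |>.symm

theorem fderiv_fderiv_apply_eq_zero_of_eventually {L : E → E}
    (hW : DifferentiableAt ℝ (fderiv ℝ W) x) (hcrit : fderiv ℝ W x = 0)
    (hL : DifferentiableAt ℝ L x) (hinv : ∀ᶠ y in 𝓝 x, fderiv ℝ W y (L y) = 0) (v : E) :
    fderiv ℝ (fderiv ℝ W) x v (L x) = 0 := by
  have hderiv := hW.hasFDerivAt.clm_apply hL.hasFDerivAt
  rw [hcrit] at hderiv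
  have h := congrArg (· v) ((hasFDerivAt_zero_of_eventually_const 0 hinv).unique hderiv)
  simpa using h.symm

theorem IsSymmSndFDerivAt.fderiv_fderiv_add_smul (hsymm : IsSymmSndFDerivAt ℝ W x)
    (hker : ∀ y, fderiv ℝ (fderiv ℝ W) x y v = 0) (y : E) (a : ℝ) :
    fderiv ℝ (fderiv ℝ W) x (y + a • v) (y + a • v) = fderiv ℝ (fderiv ℝ W) x y y := by
  simp [hker, hsymm.eq v]

end Calculus

local notation "Mat" => Matrix (Fin 2) (Fin 2) ℝ

noncomputable def rotationGenerator : Mat := !![0, -1; 1, 0]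

noncomputable def rotationMatrix (θ : ℝ) : Mat :=
  Real.cos θ • 1 + Real.sin θ • rotationGenerator

theorem rotationMatrix_mem_SO2 (θ : ℝ) :
    (rotationMatrix θ)ᵀ * rotationMatrix θ = 1 ∧ (rotationMatrix θ).det = 1 := by
  constructor
  · ext i j
    fin_cases i <;> fin_cases j <;>
      simp [rotationMatrix, rotationGenerator, Matrix.mul_apply, Matrix.one_apply, ← sq, mul_comm]
  · simp [rotationMatrix, rotationGenerator, Matrix.det_fin_two, ← sq]

theorem hasDerivAt_rotationMatrix_mul (F : Mat) :
    HasDerivAt (fun θ => rotationMatrix θ * F) (rotationGenerator * F) 0 := by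
  have hmul : (fun θ => rotationMatrix θ * F) =
      fun θ => Real.cos θ • F + Real.sin θ • (rotationGenerator * F) := by
    funext θ
    simp [rotationMatrix, add_mul]
  have h := ((Real.hasDerivAt_cos 0).smul_const F).add
    ((Real.hasDerivAt_sin 0).smul_const (rotationGenerator * F))
  rw [hmul]
  simp only [Real.sin_zero, neg_zero, zero_smul, Real.cos_zero, one_smul, zero_add] at h
  exact h

theorem symPart_add_smul_rotationGenerator (F : Mat) :
    symPart F + ((F 1 0 - F 0 1) / 2) • rotationGenerator = F := by
  ext i j
  fin_cases i <;> fin_cases j <;> simp [rotationGenerator, symPart] <;> ring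

theorem symPart_eq_zero_of_transpose_eq_neg {A : Mat} (hA : Aᵀ = -A) : symPart A = 0 := by
  simp [symPart, hA]

theorem hessQ_eq_hessQ_symPart_general
    (W : Matrix (Fin 2) (Fin 2) ℝ → ℝ)
    (hWnonneg : ∀ F, 0 ≤ W F)
    (U : Set (Matrix (Fin 2) (Fin 2) ℝ)) (hUopen : IsOpen U)
    (hUSO : {R : Matrix (Fin 2) (Fin 2) ℝ | Rᵀ * R = 1 ∧ R.det = 1} ⊆ U)
    (hC2 : ContDiffOn ℝ 2 W U)
    (hframe : ∀ R F : Matrix (Fin 2) (Fin 2) ℝ, Rᵀ * R = 1 → R.det = 1 → W (R * F) = W F)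
    (hzero : ∀ F : Matrix (Fin 2) (Fin 2) ℝ, W F = 0 ↔ (Fᵀ * F = 1 ∧ F.det = 1)) :
    (∀ F : Matrix (Fin 2) (Fin 2) ℝ, hessQ W F = hessQ W (symPart F)) ∧
    (∀ A : Matrix (Fin 2) (Fin 2) ℝ, Aᵀ = -A → hessQ W A = 0) := by
  have hU : U ∈ 𝓝 (1 : Mat) := hUopen.mem_nhds (hUSO ⟨by simp, by simp⟩)
  have hC2one : ContDiffAt ℝ 2 W 1 := hC2.contDiffAt hU
  have hcrit : fderiv ℝ W 1 = 0 := by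
    have hW1 : W 1 = 0 := (hzero 1).2 ⟨by simp, by simp⟩
    exact IsLocalMin.fderiv_eq_zero (.of_forall fun F => hW1 ▸ hWnonneg F)
  have hinv : ∀ᶠ F in 𝓝 (1 : Mat), fderiv ℝ W F (rotationGenerator * F) = 0 := by
    filter_upwards [hU] with F hF
    exact fderiv_apply_eq_zero_of_comp_eq_const
      ((hC2.contDiffAt (hUopen.mem_nhds hF)).differentiableAt two_ne_zero)
      (hasDerivAt_rotationMatrix_mul F) (by simp [rotationMatrix])
      fun θ => hframe _ F (rotationMatrix_mem_SO2 θ).1 (rotationMatrix_mem_SO2 θ).2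
  have hker : ∀ X, fderiv ℝ (fderiv ℝ W) 1 X rotationGenerator = 0 := fun X => by
    have h := fderiv_fderiv_apply_eq_zero_of_eventually (L := (rotationGenerator * ·))
      ((hC2one.fderiv_right (m := 1) le_rfl).differentiableAt one_ne_zero) hcrit
      (LinearMap.mulLeft ℝ rotationGenerator).toContinuousLinearMap.differentiableAt hinv X
    rw [mul_one] at h
    exact h
  have hsymm := hC2one.isSymmSndFDerivAt (by simp)
  have hsymPart : ∀ F, hessQ W F = hessQ W (symPart F) := fun F => by
    conv_lhs => rw [← symPart_add_smul_rotationGenerator F]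
    exact hsymm.fderiv_fderiv_add_smul hker _ _
  refine ⟨hsymPart, fun A hA => ?_⟩
  rw [hsymPart, symPart_eq_zero_of_transpose_eq_neg hA]
  simp [hessQ]

/-- If `W` is continuous, nonnegative, `C²` near `SO(2)`, frame indifferent and vanishes
exactly on `SO(2)`, then `Q(F) := D²W(Id)[F,F]` satisfies `Q(F) = Q(sym F)` for all `F`;
in particular `Q` vanishes on skew-symmetric matrices. -/
theorem hessQ_eq_hessQ_symPart
    (W : Matrix (Fin 2) (Fin 2) ℝ → ℝ)
    (hWcont : Continuous W) (hWnonneg : ∀ F, 0 ≤ W F)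
    (U : Set (Matrix (Fin 2) (Fin 2) ℝ)) (hUopen : IsOpen U)
    (hUSO : {R : Matrix (Fin 2) (Fin 2) ℝ | Rᵀ * R = 1 ∧ R.det = 1} ⊆ U)
    (hC2 : ContDiffOn ℝ 2 W U)
    (hframe : ∀ R F : Matrix (Fin 2) (Fin 2) ℝ, Rᵀ * R = 1 → R.det = 1 → W (R * F) = W F)
    (hzero : ∀ F : Matrix (Fin 2) (Fin 2) ℝ, W F = 0 ↔ (Fᵀ * F = 1 ∧ F.det = 1)) :
    (∀ F : Matrix (Fin 2) (Fin 2) ℝ, hessQ W F = hessQ W (symPart F)) ∧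
    (∀ A : Matrix (Fin 2) (Fin 2) ℝ, Aᵀ = -A → hessQ W A = 0) :=
  hessQ_eq_hessQ_symPart_general W hWnonneg U hUopen hUSO hC2 hframe hzero
end
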